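/- arXiv:2412.07932 — 2 statements merged into one kernel-verified Lean document; each statement's English description precedes it below -/
import Mathlib

section
/- Let G be an abelian subgroup of SL(2,ℂ) containing at least one element that is not a scalar multiple of the identity. Then G is unitary if and only if the ℝ-subalgebra A of the 2×2 complex matrices generated by G has real dimension 2. -/
/-!
Fix a non-scalar `g ∈ G`. Since `G` is abelian, every element of `G` lies in the centralizer
`ℂ1 + ℂg` of `g`, and both sides of the equivalence turn out to say that `G ⊆ ℝ1 + ℝg`.

The plane `ℝ1 + ℝg` has real dimension 2, and it is a subalgebra as soon as it contains `g²`,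
so it equals the algebra generated by `G` exactly when it contains `G`.

For `u` of determinant one, `uᴴ H u = H` is equivalent to the linear condition
`uᴴ H = H adj u`. On `2 × 2` matrices `adj` is `ℂ`-linear while `ᴴ` is conjugate-linear,
so for `u = α + β g` with `g` preserving `H` this condition reads `ᾱ = α`, `β̄ = β`.
Conversely, if `G ⊆ ℝ1 + ℝg` then `g` has real trace, and `i (gᴴ K - K g)` is a `g`-invariant
Hermitian form for every Hermitian `K`; it is nondegenerate for `K = 1` unless `g` is
Hermitian, and for some `K` not commuting with `g` otherwise, because a nonzero traceless
Hermitian `2 × 2` matrix has nonzero determinant.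
-/

open Matrix Complex

/-- A subgroup of `SL(2,ℂ)`, viewed as a set of matrices, is *unitary* if it preserves some
nondegenerate Hermitian form `H` under `g ↦ gᴴ H g`. -/
def IsUnitarySubgroup (G : Subgroup (Matrix.SpecialLinearGroup (Fin 2) ℂ)) : Prop :=
  ∃ H : Matrix (Fin 2) (Fin 2) ℂ, H.IsHermitian ∧ H.det ≠ 0 ∧
    ∀ g ∈ G, (g : Matrix (Fin 2) (Fin 2) ℂ)ᴴ * H * (g : Matrix (Fin 2) (Fin 2) ℂ) = H

section SpanOnePair

open Submodule
open scoped Pointwise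

variable {K A : Type*} [Field K] [Ring A] [Algebra K A]

theorem linearIndependent_one_of_forall_ne_smul_one [Nontrivial A] {m : A}
    (hm : ∀ c : K, m ≠ c • 1) : LinearIndependent K ![1, m] :=
  (LinearIndependent.pair_iff' one_ne_zero).mpr fun c h => hm c h.symm

theorem finrank_span_pair_eq_two {x y : A} (h : LinearIndependent K ![x, y]) :
    Module.finrank K (span K {x, y}) = 2 := by
  rw [← Matrix.range_cons_cons_empty x y ![]]
  simpa using finrank_span_eq_card h

theorem mul_mem_span_one_pair {g x y : A} (hg : g * g ∈ span K {1, g})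
    (hx : x ∈ span K {1, g}) (hy : y ∈ span K {1, g}) : x * y ∈ span K {1, g} := by
  have hsq : ({1, g} : Set A) * ({1, g} : Set A) ⊆ (span K {1, g} : Set A) := by
    rintro _ ⟨a, ha, b, hb, rfl⟩
    have h1 : (1 : A) ∈ span K {1, g} := subset_span (by simp)
    have hg1 : g ∈ span K {1, g} := subset_span (by simp)
    rcases ha with rfl | rfl <;> rcases hb with rfl | rfl <;> simpa
  rw [← span_le, ← span_mul_span] at hsq
  exact hsq (mul_mem_mul hx hy)

theorem finrank_adjoin_eq_two_iff [FiniteDimensional K A] {S : Set A} {g : A} (hgS : g ∈ S)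
    (hg2 : g * g ∈ S) (hli : LinearIndependent K ![1, g]) :
    Module.finrank K (Algebra.adjoin K S) = 2 ↔ S ⊆ span K {1, g} := by
  set V := span K {1, g}
  have hV : V ≤ Subalgebra.toSubmodule (Algebra.adjoin K S) := by
    rw [span_le, Set.pair_subset_iff]
    exact ⟨(Algebra.adjoin K S).one_mem, Algebra.subset_adjoin hgS⟩
  constructor
  · intro hdim
    have hVeq := eq_of_le_of_finrank_eq hV ((finrank_span_pair_eq_two hli).trans hdim.symm)
    exact fun x hx => hVeq ▸ Algebra.subset_adjoin hx
  · intro hS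
    have hle : Algebra.adjoin K S ≤ V.toSubalgebra (subset_span (by simp))
        (fun _ _ => mul_mem_span_one_pair (hS hg2)) := Algebra.adjoin_le hS
    rw [← finrank_span_pair_eq_two hli, le_antisymm hle hV]
    rfl

end SpanOnePair

namespace Matrix

section FinTwo

variable {R : Type*} [CommRing R]

theorem adjugate_fin_two_eq_trace_smul_sub (A : Matrix (Fin 2) (Fin 2) R) :
    adjugate A = A.trace • 1 - A := by
  ext i j
  fin_cases i <;> fin_cases j <;> simp [adjugate_fin_two, trace_fin_two]

theorem mul_self_fin_two (A : Matrix (Fin 2) (Fin 2) R) : A * A = A.trace • A - A.det • 1 := by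
  have h := mul_adjugate A
  rw [adjugate_fin_two_eq_trace_smul_sub, mul_sub, mul_smul_comm, mul_one] at h
  rw [← h, sub_sub_cancel]

theorem adjugate_fin_two_smul_one_add_smul (a b : R) (A : Matrix (Fin 2) (Fin 2) R) :
    adjugate (a • 1 + b • A) = a • 1 + b • adjugate A := by
  simp only [adjugate_fin_two_eq_trace_smul_sub, trace_add, trace_smul, trace_one,
    Fintype.card_fin, smul_sub, smul_smul]
  module

theorem adjugate_fin_two_ne_smul_one {A : Matrix (Fin 2) (Fin 2) R} (hA : ∀ c : R, A ≠ c • 1)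
    (c : R) : adjugate A ≠ c • 1 := by
  rw [adjugate_fin_two_eq_trace_smul_sub]
  intro h
  exact hA (A.trace - c) (by rw [sub_smul, ← h, sub_sub_cancel])

theorem conjTranspose_mul_mul_eq_iff [StarRing R] {n : Type*} [Fintype n] [DecidableEq n]
    {u H : Matrix n n R} (hu : u.det = 1) : uᴴ * H * u = H ↔ uᴴ * H = H * adjugate u := by
  constructor
  · intro h
    calc uᴴ * H = uᴴ * H * (u * adjugate u) := by rw [mul_adjugate, hu, one_smul, mul_one]
      _ = H * adjugate u := by rw [← mul_assoc, h]
  · intro h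
    rw [h, mul_assoc, adjugate_mul, hu, one_smul, mul_one]

theorem exists_eq_smul_one_add_smul_of_commute {K : Type*} [Field K]
    {m x : Matrix (Fin 2) (Fin 2) K} (hm : ∀ c : K, m ≠ c • 1) (hx : Commute x m) :
    ∃ α β : K, x = α • 1 + β • m := by
  -- coordinates of the traceless part; the commutator `[x, m]` is the cross product of these
  let v : Matrix (Fin 2) (Fin 2) K → Fin 3 → K := fun A => ![A 0 0 - A 1 1, A 0 1, A 1 0]
  have hvm : v m ≠ 0 := by
    intro h
    simp only [v, cons_eq_zero_iff, sub_eq_zero] at h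
    apply hm (m 0 0)
    ext i j
    fin_cases i <;> fin_cases j <;> simp [h.1, h.2.1, h.2.2.1]
  have hcross : crossProduct (v x) (v m) = 0 := by
    have e : ∀ i j, (x * m) i j = (m * x) i j := fun i j => by rw [hx.eq]
    have e00 := e 0 0; have e01 := e 0 1; have e10 := e 1 0
    simp only [mul_apply, Fin.sum_univ_two] at e00 e01 e10
    simp only [v, cross_apply, cons_eq_zero_iff, zero_empty, and_true, cons_val_zero, cons_val_one,
      cons_val_two, head_cons, tail_cons]
    exact ⟨by linear_combination e00, by linear_combination e10, by linear_combination e01⟩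
  have hdep : ¬ LinearIndependent K ![v m, v x] := by
    rw [LinearIndependent.pair_symm_iff, ← crossProduct_ne_zero_iff_linearIndependent, hcross]
    exact fun h => h rfl
  obtain ⟨β, hβ⟩ : ∃ β : K, β • v m = v x := by
    simpa [LinearIndependent.pair_iff' hvm] using hdep
  simp only [v, smul_cons, smul_empty, smul_eq_mul, vecCons_inj, and_true] at hβ
  obtain ⟨h0, h1, h2⟩ := hβ
  refine ⟨x 1 1 - β * m 1 1, β, ?_⟩
  ext i j
  fin_cases i <;> fin_cases j <;> simp [← h1, ← h2]
  linear_combination -h0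

end FinTwo

theorem IsHermitian.det_ne_zero_of_trace_eq_zero {R : Type*} [CommRing R] [PartialOrder R]
    [StarRing R] [StarOrderedRing R] [NoZeroDivisors R] {H : Matrix (Fin 2) (Fin 2) R}
    (hH : H.IsHermitian) (htr : H.trace = 0) (h0 : H ≠ 0) : H.det ≠ 0 := by
  intro hdet
  apply h0
  rw [← conjTranspose_mul_self_eq_zero, hH.eq, mul_self_fin_two, htr, hdet, zero_smul,
    zero_smul, sub_zero]

end Matrix

open scoped ComplexOrder

local notation "Mat" => Matrix (Fin 2) (Fin 2) ℂ

theorem eq_smul_one_of_forall_isHermitian_commute {g : Mat}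
    (h : ∀ K : Mat, K.IsHermitian → Commute K g) : g = g 0 0 • 1 := by
  have hE := h !![1, 0; 0, 0] (by ext i j; fin_cases i <;> fin_cases j <;> simp)
  have hX := h !![0, 1; 1, 0] (by ext i j; fin_cases i <;> fin_cases j <;> simp)
  have e₁ := congrFun₂ hE.eq 0 1
  have e₂ := congrFun₂ hE.eq 1 0
  have e₃ := congrFun₂ hX.eq 0 1
  simp only [mul_apply, Fin.sum_univ_two, of_apply, cons_val', cons_val_fin_one, cons_val_zero,
    cons_val_one, one_mul, zero_mul, mul_one, mul_zero, add_zero, zero_add] at e₁ e₂ e₃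
  ext i j
  fin_cases i <;> fin_cases j <;> simp [e₁, e₂.symm, e₃]

theorem exists_isHermitian_trace_eq_zero_ne_zero {g : Mat} (htr : star g.trace = g.trace)
    (hg : ∀ c : ℂ, g ≠ c • 1) :
    ∃ K : Mat, K.IsHermitian ∧ (gᴴ * K - K * g).trace = 0 ∧ gᴴ * K - K * g ≠ 0 := by
  by_cases hherm : gᴴ = g
  · obtain ⟨K, hK, hKg⟩ : ∃ K : Mat, K.IsHermitian ∧ ¬ Commute K g := by
      by_contra! h
      exact hg _ (eq_smul_one_of_forall_isHermitian_commute h)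
    rw [hherm]
    exact ⟨K, hK, by rw [trace_sub, trace_mul_comm, sub_self],
      sub_ne_zero.mpr fun h => hKg h.symm⟩
  · refine ⟨1, isHermitian_one, ?_, by simpa [sub_eq_zero] using hherm⟩
    rw [mul_one, one_mul, trace_sub, trace_conjTranspose, htr, sub_self]

theorem exists_isHermitian_det_ne_zero_conjTranspose_mul_mul_eq {g : Mat} (hdet : g.det = 1)
    (htr : star g.trace = g.trace) (hg : ∀ c : ℂ, g ≠ c • 1) :
    ∃ H : Mat, H.IsHermitian ∧ H.det ≠ 0 ∧ gᴴ * H * g = H := by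
  obtain ⟨K, hK, hMtr, hM0⟩ := exists_isHermitian_trace_eq_zero_ne_zero htr hg
  have hinv : gᴴ * (gᴴ * K - K * g) * g = gᴴ * K - K * g := by
    have hg2 := mul_self_fin_two g
    have hgH2 := mul_self_fin_two gᴴ
    rw [hdet] at hg2
    rw [trace_conjTranspose, det_conjTranspose, htr, hdet, star_one] at hgH2
    calc gᴴ * (gᴴ * K - K * g) * g = (gᴴ * gᴴ) * K * g - gᴴ * K * (g * g) := by
          noncomm_ring
      _ = gᴴ * K - K * g := by
        rw [hg2, hgH2]
        simp only [sub_mul, mul_sub, smul_mul_assoc, mul_smul_comm, one_mul, mul_one, one_smul]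
        abel
  have hHerm : (I • (gᴴ * K - K * g)).IsHermitian := by
    rw [IsHermitian, conjTranspose_smul, conjTranspose_sub, conjTranspose_mul, conjTranspose_mul,
      conjTranspose_conjTranspose, hK.eq, star_def, conj_I, neg_smul, ← smul_neg, neg_sub]
  refine ⟨I • (gᴴ * K - K * g), hHerm, hHerm.det_ne_zero_of_trace_eq_zero ?_ ?_, ?_⟩
  · rw [trace_smul, hMtr, smul_zero]
  · exact smul_ne_zero I_ne_zero hM0
  · rw [mul_smul_comm, smul_mul_assoc, hinv]

theorem conjTranspose_smul_one_add_smul_mul_eq_iff {H g : Mat} (hH : H.det ≠ 0)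
    (hgH : gᴴ * H = H * adjugate g) (hg : ∀ c : ℂ, g ≠ c • 1) (α β : ℂ) :
    (α • 1 + β • g)ᴴ * H = H * adjugate (α • 1 + β • g) ↔
      star α = α ∧ star β = β := by
  have hli := linearIndependent_one_of_forall_ne_smul_one (adjugate_fin_two_ne_smul_one hg)
  have hunit : IsUnit H := (isUnit_iff_isUnit_det H).mpr (isUnit_iff_ne_zero.mpr hH)
  have hconj : (α • 1 + β • g)ᴴ * H = H * (star α • 1 + star β • adjugate g) := by
    rw [conjTranspose_add, conjTranspose_smul, conjTranspose_smul, conjTranspose_one, add_mul,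
      smul_mul_assoc, smul_mul_assoc, one_mul, hgH, mul_add, mul_smul_comm, mul_smul_comm, mul_one]
  rw [hconj, adjugate_fin_two_smul_one_add_smul, hunit.mul_right_inj]
  exact ⟨hli.eq_of_pair, fun ⟨hα, hβ⟩ => by rw [hα, hβ]⟩

theorem star_trace_eq_of_mul_self_mem_span {g : Mat} (hg : ∀ c : ℂ, g ≠ c • 1)
    (hg2 : g * g ∈ Submodule.span ℝ {1, g}) : star g.trace = g.trace := by
  obtain ⟨a, b, hab⟩ := Submodule.mem_span_pair.mp hg2
  have h : (a : ℂ) • 1 + (b : ℂ) • g = (-g.det) • 1 + g.trace • g := by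
    rw [coe_smul, coe_smul, hab, mul_self_fin_two, neg_smul]
    abel
  rw [← ((linearIndependent_one_of_forall_ne_smul_one hg).eq_of_pair h).2, star_def, conj_ofReal]

local notation "SL" => Matrix.SpecialLinearGroup (Fin 2) ℂ

theorem isUnitarySubgroup_iff_forall_mem_span {G : Subgroup SL}
    (hab : ∀ a ∈ G, ∀ b ∈ G, a * b = b * a) {g : SL} (hgG : g ∈ G)
    (hg : ∀ c : ℂ, (g : Mat) ≠ c • 1) :
    IsUnitarySubgroup G ↔ ∀ h ∈ G, (h : Mat) ∈ Submodule.span ℝ {1, (g : Mat)} := by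
  constructor
  · rintro ⟨H, -, hH, hinv⟩ h hh
    have hgH := (conjTranspose_mul_mul_eq_iff g.2).mp (hinv g hgG)
    have hcomm : Commute (h : Mat) g :=
      Commute.map (show Commute h g from hab h hh g hgG) SpecialLinearGroup.coeMonoidHom
    obtain ⟨α, β, hαβ⟩ := exists_eq_smul_one_add_smul_of_commute hg hcomm
    have hhH := (conjTranspose_mul_mul_eq_iff h.2).mp (hinv h hh)
    rw [hαβ, conjTranspose_smul_one_add_smul_mul_eq_iff hH hgH hg] at hhH
    rw [hαβ, ← conj_eq_iff_re.mp hhH.1, ← conj_eq_iff_re.mp hhH.2, coe_smul, coe_smul]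
    exact Submodule.mem_span_pair.mpr ⟨_, _, rfl⟩
  · intro hG
    have htr := star_trace_eq_of_mul_self_mem_span hg (hG (g * g) (mul_mem hgG hgG))
    obtain ⟨H, hHerm, hH, hgH⟩ :=
      exists_isHermitian_det_ne_zero_conjTranspose_mul_mul_eq g.2 htr hg
    refine ⟨H, hHerm, hH, fun h hh => ?_⟩
    obtain ⟨x, y, hxy⟩ := Submodule.mem_span_pair.mp (hG h hh)
    rw [conjTranspose_mul_mul_eq_iff h.2, ← hxy, ← coe_smul, ← coe_smul,
      conjTranspose_smul_one_add_smul_mul_eq_iff hH ((conjTranspose_mul_mul_eq_iff g.2).mp hgH) hg]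
    exact ⟨conj_ofReal x, conj_ofReal y⟩

/-- An abelian subgroup of `SL(2,ℂ)` containing a non-scalar element is unitary iff the
real algebra it generates has dimension 2. -/
theorem abelian_unitary_iff_dim_two
    (G : Subgroup (Matrix.SpecialLinearGroup (Fin 2) ℂ))
    (hab : ∀ a ∈ G, ∀ b ∈ G, a * b = b * a)
    (hns : ∃ g ∈ G, ∀ c : ℂ, (g : Matrix (Fin 2) (Fin 2) ℂ) ≠ c • (1 : Matrix (Fin 2) (Fin 2) ℂ)) :
    IsUnitarySubgroup G ↔
      Module.finrank ℝ
        (Algebra.adjoin ℝ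
          ((fun g : Matrix.SpecialLinearGroup (Fin 2) ℂ => (g : Matrix (Fin 2) (Fin 2) ℂ)) ''
            (G : Set (Matrix.SpecialLinearGroup (Fin 2) ℂ)))) = 2 := by
  obtain ⟨g, hgG, hg⟩ := hns
  have hli : LinearIndependent ℝ ![1, (g : Mat)] :=
    (linearIndependent_one_of_forall_ne_smul_one hg).restrict_scalars' ℝ
  rw [isUnitarySubgroup_iff_forall_mem_span hab hgG hg,
    finrank_adjoin_eq_two_iff (Set.mem_image_of_mem _ hgG) ⟨g * g, mul_mem hgG hgG, rfl⟩ hli]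
  exact Set.image_subset_iff.symm
end

section
/- Let G be a non-abelian subgroup of SL(2,ℂ) whose natural action on ℂ² is reducible. Then G is unitary if and only if the ℝ-subalgebra A of the 2×2 complex matrices generated by G has real dimension 3; equivalently, if and only if G is conjugate to a (non-abelian) subgroup of the group of real upper-triangular 2×2 matrices of determinant 1. -/
open Matrix Complex

/-- The natural action of `G ⊆ SL(2,ℂ)` on `ℂ²` is reducible if there is a nonzero common
eigenvector. -/
def IsReducibleSubgroup (G : Subgroup (Matrix.SpecialLinearGroup (Fin 2) ℂ)) : Prop :=
  ∃ v : Fin 2 → ℂ, v ≠ 0 ∧ ∀ g ∈ G, ∃ c : ℂ, (g : Matrix (Fin 2) (Fin 2) ℂ) *ᵥ v = c • v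

/-!
Conjugating `G` so that it fixes the line `ℂ e₀` makes it upper triangular, `g = [[a, b], [0, d]]`
with `a d = 1`, and since `G` is not abelian a further conjugation puts `D = diag(λ, λ⁻¹)` with
`λ² ≠ 1` into `G`, next to some `h` with `h₀₁ ≠ 0`.

An invariant Hermitian form `H` is then pinned down by `D` and `h`: `H₀₀ = 0`, so `H₀₁ = η ≠ 0`,
which forces every `a` (and so `λ`) to be real and then `H₁₁ = 0`; the remaining invariance
equation says that `i η̄ b` is real, so conjugating by `diag(i η̄, 1)` makes `G` real. Conversely
real matrices of determinant one preserve the form `[[0, i], [-i, 0]]`.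

The algebra `A` contains `1` and two non-commuting elements, so `dim A ≥ 3`, with equality when
`G` is conjugate into the real upper-triangular matrices. If `dim A = 3`, then `A` is spanned by
`1`, `D` and the nilpotent commutator `N = D h - h D`; as `D N = λ N ∈ A`, `λ` is real, and a
diagonal conjugation makes `1`, `D`, `N`, hence all of `A`, real upper triangular.
-/

local notation "M₂" => Matrix (Fin 2) (Fin 2) ℂ

section

variable {K A : Type*} [Field K] [Ring A] [Algebra K A]

theorem linearIndependent_one_of_mul_ne {a b : A} (hab : a * b ≠ b * a) :
    LinearIndependent K ![1, a, b] := by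
  have : Nontrivial A := ⟨⟨a * b, b * a, hab⟩⟩
  rw [Fintype.linearIndependent_iff]
  intro r hr
  simp only [Fin.sum_univ_three, cons_val_zero, cons_val_one, cons_val_two, tail_cons,
    head_cons] at hr
  -- commuting the relation with `a`, then with `b`, kills the other two coefficients
  have h2 : r 2 • (a * b - b * a) = 0 := by
    have := congrArg (fun x => a * x - x * a) hr
    simp only [mul_add, add_mul, mul_smul_comm, smul_mul_assoc, mul_one, one_mul, mul_zero,
      zero_mul, sub_zero] at this
    rw [smul_sub]; linear_combination (norm := module) this
  have h1 : r 1 • (b * a - a * b) = 0 := by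
    have := congrArg (fun x => b * x - x * b) hr
    simp only [mul_add, add_mul, mul_smul_comm, smul_mul_assoc, mul_one, one_mul, mul_zero,
      zero_mul, sub_zero] at this
    rw [smul_sub]; linear_combination (norm := module) this
  have hr2 := (smul_eq_zero.mp h2).resolve_right (sub_ne_zero.mpr hab)
  have hr1 := (smul_eq_zero.mp h1).resolve_right (sub_ne_zero.mpr hab.symm)
  simp only [hr1, hr2, zero_smul, add_zero, smul_eq_zero, one_ne_zero, or_false] at hr
  intro i; fin_cases i <;> assumption

theorem finrank_span_one_of_mul_ne {a b : A} (hab : a * b ≠ b * a) :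
    Module.finrank K (Submodule.span K (Set.range ![1, a, b])) = 3 := by
  rw [finrank_span_eq_card (linearIndependent_one_of_mul_ne hab)]; simp

variable {B : Subalgebra K A} {a b : A}

theorem span_one_le_toSubmodule (ha : a ∈ B) (hb : b ∈ B) :
    Submodule.span K (Set.range ![1, a, b]) ≤ Subalgebra.toSubmodule B := by
  rw [Submodule.span_le]
  rintro _ ⟨i, rfl⟩
  fin_cases i
  exacts [B.one_mem, ha, hb]

variable [FiniteDimensional K A]

theorem three_le_finrank_of_mul_ne (ha : a ∈ B) (hb : b ∈ B) (hab : a * b ≠ b * a) :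
    3 ≤ Module.finrank K B := by
  rw [← Subalgebra.finrank_toSubmodule, ← finrank_span_one_of_mul_ne (K := K) hab]
  exact Submodule.finrank_mono (span_one_le_toSubmodule ha hb)

theorem toSubmodule_eq_span_of_finrank_eq_three (ha : a ∈ B) (hb : b ∈ B)
    (hab : a * b ≠ b * a) (hB : Module.finrank K B = 3) :
    Subalgebra.toSubmodule B = Submodule.span K (Set.range ![1, a, b]) :=
  (Submodule.eq_of_le_of_finrank_le (span_one_le_toSubmodule ha hb) (by
    rw [Subalgebra.finrank_toSubmodule, hB, finrank_span_one_of_mul_ne hab])).symm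

end

noncomputable def conjBy (U : GL (Fin 2) ℂ) : M₂ ≃ₐ[ℝ] M₂ :=
  MulSemiringAction.toAlgEquiv ℝ M₂ (ConjAct.toConjAct U)

theorem conjBy_apply (U : GL (Fin 2) ℂ) (X : M₂) :
    conjBy U X = (U : M₂) * X * ((U⁻¹ : GL (Fin 2) ℂ) : M₂) := rfl

theorem conjBy_mul (U V : GL (Fin 2) ℂ) (X : M₂) : conjBy (U * V) X = conjBy U (conjBy V X) := by
  simp only [conjBy_apply, _root_.mul_inv_rev, Units.val_mul, Matrix.mul_assoc]

theorem conjBy_inv_conjBy (U : GL (Fin 2) ℂ) (X : M₂) : conjBy U⁻¹ (conjBy U X) = X := by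
  rw [← conjBy_mul, inv_mul_cancel]; simp [conjBy_apply]

theorem det_conjBy (U : GL (Fin 2) ℂ) (X : M₂) : (conjBy U X).det = X.det :=
  det_units_conj U X

theorem finrank_adjoin_conjBy_image (U : GL (Fin 2) ℂ) (S : Set M₂) :
    Module.finrank ℝ (Algebra.adjoin ℝ (conjBy U '' S)) =
      Module.finrank ℝ (Algebra.adjoin ℝ S) := by
  rw [show conjBy U '' S = (conjBy U : M₂ →ₐ[ℝ] M₂) '' S from rfl, Algebra.adjoin_image]
  exact ((conjBy U).subalgebraMap _).toLinearEquiv.finrank_eq.symm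

def diagUnit (u : ℂˣ) : GL (Fin 2) ℂ :=
  ⟨!![(u : ℂ), 0; 0, 1], !![↑u⁻¹, 0; 0, 1], by simp [one_fin_two], by simp [one_fin_two]⟩

theorem conjBy_diagUnit (u : ℂˣ) (X : M₂) :
    conjBy (diagUnit u) X = !![X 0 0, u * X 0 1; ↑u⁻¹ * X 1 0, X 1 1] := by
  rw [conjBy_apply, eta_fin_two X]
  simp [diagUnit, mul_comm _ (X 0 0), mul_comm (X 1 0)]

theorem conjBy_upperRightHom (μ : ℂ) {X : M₂} (hX : X 1 0 = 0) :
    conjBy (GeneralLinearGroup.upperRightHom μ) X =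
      !![X 0 0, X 0 1 + μ * (X 1 1 - X 0 0); 0, X 1 1] := by
  rw [conjBy_apply, eta_fin_two X]
  simp [GeneralLinearGroup.upperRightHom, hX]
  ring

def PreservesHermitianForm (S : Set M₂) : Prop :=
  ∃ H : M₂, H.IsHermitian ∧ H.det ≠ 0 ∧ ∀ g ∈ S, gᴴ * H * g = H

theorem PreservesHermitianForm.conjBy_image {S : Set M₂} (hS : PreservesHermitianForm S)
    (U : GL (Fin 2) ℂ) : PreservesHermitianForm (conjBy U '' S) := by
  obtain ⟨H, hH, hdet, hinv⟩ := hS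
  set V : M₂ := ((U⁻¹ : GL (Fin 2) ℂ) : M₂)
  refine ⟨Vᴴ * H * V, isHermitian_conjTranspose_mul_mul V hH, ?_, ?_⟩
  · have hV : IsUnit V.det := (Matrix.isUnit_iff_isUnit_det V).mp (U⁻¹).isUnit
    rw [det_mul, det_mul, det_conjTranspose]
    exact mul_ne_zero (mul_ne_zero (by simpa using hV.ne_zero) hdet) hV.ne_zero
  · rintro _ ⟨g, hg, rfl⟩
    have hUV : (U : M₂)ᴴ * Vᴴ = 1 := by
      rw [← conjTranspose_mul, Units.inv_mul, conjTranspose_one]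
    calc (conjBy U g)ᴴ * (Vᴴ * H * V) * conjBy U g
        = Vᴴ * gᴴ * ((U : M₂)ᴴ * Vᴴ) * H * (V * U) * g * V := by
          simp only [conjBy_apply, conjTranspose_mul, Matrix.mul_assoc]; rfl
      _ = Vᴴ * (gᴴ * H * g) * V := by
          rw [hUV, Units.inv_mul]; simp only [Matrix.mul_one, Matrix.mul_assoc]
      _ = Vᴴ * H * V := by rw [hinv g hg]

theorem preservesHermitianForm_conjBy_image_iff {S : Set M₂} (U : GL (Fin 2) ℂ) :
    PreservesHermitianForm (conjBy U '' S) ↔ PreservesHermitianForm S := by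
  refine ⟨fun h => ?_, fun h => h.conjBy_image U⟩
  simpa [Set.image_image, conjBy_inv_conjBy] using h.conjBy_image U⁻¹

def IsRealUpperTriangularSL (M : M₂) : Prop :=
  (∀ i j, (M i j).im = 0) ∧ M 1 0 = 0 ∧ M.det = 1

def IsRealTriangularizable (S : Set M₂) : Prop :=
  ∃ U : GL (Fin 2) ℂ, ∀ g ∈ S, IsRealUpperTriangularSL (conjBy U g)

theorem IsRealTriangularizable.of_conjBy_image {S : Set M₂} {U : GL (Fin 2) ℂ}
    (h : IsRealTriangularizable (conjBy U '' S)) : IsRealTriangularizable S := by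
  obtain ⟨V, hV⟩ := h
  exact ⟨V * U, fun g hg => by simpa only [conjBy_mul] using hV _ ⟨g, hg, rfl⟩⟩

theorem conjTranspose_mul_mul_of_im_eq_zero {M : M₂} (hM : ∀ i j, (M i j).im = 0)
    (hdet : M.det = 1) : Mᴴ * !![0, I; -I, 0] * M = !![0, I; -I, 0] := by
  have hstar : ∀ i j, star (M i j) = M i j := fun i j => conj_eq_iff_im.mpr (hM i j)
  rw [det_fin_two] at hdet
  ext i j; fin_cases i <;> fin_cases j <;>
    simp [Matrix.mul_apply, Fin.sum_univ_two, hstar]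
  · ring
  · linear_combination I * hdet
  · linear_combination -I * hdet
  · ring

theorem IsRealTriangularizable.preservesHermitianForm {S : Set M₂}
    (h : IsRealTriangularizable S) : PreservesHermitianForm S := by
  obtain ⟨U, hU⟩ := h
  rw [← preservesHermitianForm_conjBy_image_iff U]
  refine ⟨!![0, I; -I, 0], ?_, by simp [det_fin_two], ?_⟩
  · ext i j; fin_cases i <;> fin_cases j <;> simp
  · rintro _ ⟨g, hg, rfl⟩
    exact conjTranspose_mul_mul_of_im_eq_zero (hU g hg).1 (hU g hg).2.2

def realUpperTriangular : Subalgebra ℝ M₂ where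
  carrier := {M | (∀ i j, (M i j).im = 0) ∧ M 1 0 = 0}
  mul_mem' := by
    rintro X Y ⟨hX, hX10⟩ ⟨hY, hY10⟩
    refine ⟨fun i j => ?_, ?_⟩
    · simp [Matrix.mul_apply, Fin.sum_univ_two, hX, hY]
    · simp [Matrix.mul_apply, Fin.sum_univ_two, hX10, hY10]
  add_mem' := by
    rintro X Y ⟨hX, hX10⟩ ⟨hY, hY10⟩
    exact ⟨fun i j => by simp [hX, hY], by simp [hX10, hY10]⟩
  algebraMap_mem' r := by
    refine ⟨fun i j => ?_, by simp [Algebra.algebraMap_eq_smul_one]⟩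
    fin_cases i <;> fin_cases j <;> simp [Algebra.algebraMap_eq_smul_one]

theorem finrank_realUpperTriangular_le : Module.finrank ℝ realUpperTriangular ≤ 3 := by
  rw [← Subalgebra.finrank_toSubmodule]
  refine (Submodule.finrank_mono ?_).trans
    (finrank_range_le_card ![single 0 0 (1 : ℂ), single 0 1 1, single 1 1 1])
  rintro M ⟨hM, hM10⟩
  refine (Submodule.mem_span_range_iff_exists_fun ℝ).mpr ⟨![(M 0 0).re, (M 0 1).re, (M 1 1).re], ?_⟩
  ext i j; fin_cases i <;> fin_cases j <;>
    simp [Fin.sum_univ_three, Complex.ext_iff, hM, hM10]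

theorem IsRealTriangularizable.finrank_adjoin_le {S : Set M₂} (h : IsRealTriangularizable S) :
    Module.finrank ℝ (Algebra.adjoin ℝ S) ≤ 3 := by
  obtain ⟨U, hU⟩ := h
  have hle : Algebra.adjoin ℝ (conjBy U '' S) ≤ realUpperTriangular :=
    Algebra.adjoin_le (by rintro _ ⟨g, hg, rfl⟩; exact ⟨(hU g hg).1, (hU g hg).2.1⟩)
  rw [← finrank_adjoin_conjBy_image U, ← Subalgebra.finrank_toSubmodule]
  exact (Submodule.finrank_mono hle).trans
    ((Subalgebra.finrank_toSubmodule _).trans_le finrank_realUpperTriangular_le)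

theorem mul_sub_mul_of_upper {a b : M₂} (ha : a 1 0 = 0) (hb : b 1 0 = 0) :
    a * b - b * a = !![0, (a 0 0 - a 1 1) * b 0 1 - (b 0 0 - b 1 1) * a 0 1; 0, 0] := by
  ext i j; fin_cases i <;> fin_cases j <;>
    simp [Matrix.mul_apply, Fin.sum_univ_two, ha, hb] <;> ring

theorem mul_eq_one_of_upper {g : M₂} (hg : g 1 0 = 0) (hdet : g.det = 1) :
    g 0 0 * g 1 1 = 1 := by
  simpa [det_fin_two, hg] using hdet

theorem conjBy_one_zero_eq_zero_of_mulVec_eq {U : GL (Fin 2) ℂ} {g : M₂} {v : Fin 2 → ℂ}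
    {c : ℂ} (hU : ((U⁻¹ : GL (Fin 2) ℂ) : M₂) *ᵥ Pi.single 0 1 = v) (hg : g *ᵥ v = c • v) :
    conjBy U g 1 0 = 0 := by
  have : conjBy U g *ᵥ Pi.single 0 1 = c • Pi.single 0 1 := by
    rw [conjBy_apply, ← mulVec_mulVec, ← mulVec_mulVec, hU, hg, mulVec_smul, ← hU,
      mulVec_mulVec, Units.mul_inv, one_mulVec]
  simpa [mulVec_single_one] using congrFun this 1

theorem exists_conjBy_upper {S : Set M₂} {v : Fin 2 → ℂ} (hv : v ≠ 0)
    (hev : ∀ g ∈ S, ∃ c : ℂ, g *ᵥ v = c • v) :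
    ∃ U : GL (Fin 2) ℂ, ∀ g ∈ S, conjBy U g 1 0 = 0 := by
  set V : M₂ := !![v 0, -star (v 1); v 1, star (v 0)]
  have hV : V.det ≠ 0 := by
    have hdet : V.det = ((‖v 0‖ ^ 2 + ‖v 1‖ ^ 2 : ℝ) : ℂ) := by
      simp [V, det_fin_two, mul_conj', conj_mul']
    rw [hdet, ofReal_ne_zero]
    intro h
    obtain ⟨h0, h1⟩ := (add_eq_zero_iff_of_nonneg (by positivity) (by positivity)).mp h
    exact hv (funext fun i => by fin_cases i; exacts [by simpa using h0, by simpa using h1])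
  refine ⟨(GeneralLinearGroup.mkOfDetNeZero V hV)⁻¹, fun g hg => ?_⟩
  obtain ⟨c, hc⟩ := hev g hg
  refine conjBy_one_zero_eq_zero_of_mulVec_eq ?_ hc
  ext i; fin_cases i <;> simp [V, GeneralLinearGroup.mkOfDetNeZero]

theorem exists_sq_ne_one_of_upper {S : Set M₂} (hup : ∀ g ∈ S, g 1 0 = 0)
    (hdet : ∀ g ∈ S, g.det = 1) (hnc : ∃ a ∈ S, ∃ b ∈ S, a * b ≠ b * a) :
    ∃ g ∈ S, g 0 0 ^ 2 ≠ 1 := by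
  by_contra! hsq
  -- every diagonal would be `±1`, and upper-triangular matrices with scalar diagonal commute
  have hdiag : ∀ g ∈ S, g 1 1 = g 0 0 := fun g hg => by
    linear_combination g 0 0 * mul_eq_one_of_upper (hup g hg) (hdet g hg) - g 1 1 * hsq g hg
  obtain ⟨a, ha, b, hb, hab⟩ := hnc
  apply hab
  rw [← sub_eq_zero, mul_sub_mul_of_upper (hup a ha) (hup b hb), hdiag a ha, hdiag b hb]
  simp [← Matrix.ext_iff, Fin.forall_fin_two]

theorem exists_ne_zero_of_upper {S : Set M₂} (hup : ∀ g ∈ S, g 1 0 = 0)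
    (hnc : ∃ a ∈ S, ∃ b ∈ S, a * b ≠ b * a) : ∃ h ∈ S, h 0 1 ≠ 0 := by
  by_contra! h01
  obtain ⟨a, ha, b, hb, hab⟩ := hnc
  apply hab
  rw [← sub_eq_zero, mul_sub_mul_of_upper (hup a ha) (hup b hb), h01 a ha, h01 b hb]
  simp [← Matrix.ext_iff, Fin.forall_fin_two]

theorem exists_mul_ne_conjBy_image {S : Set M₂} (U : GL (Fin 2) ℂ)
    (hnc : ∃ a ∈ S, ∃ b ∈ S, a * b ≠ b * a) :
    ∃ a ∈ conjBy U '' S, ∃ b ∈ conjBy U '' S, a * b ≠ b * a := by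
  obtain ⟨a, ha, b, hb, hab⟩ := hnc
  refine ⟨_, ⟨a, ha, rfl⟩, _, ⟨b, hb, rfl⟩, ?_⟩
  rw [← map_mul, ← map_mul]
  exact (conjBy U).injective.ne hab

theorem exists_conjBy_diagonal {g : M₂} (hg : g 1 0 = 0) (hne : g 0 0 ≠ g 1 1) :
    ∃ U : GL (Fin 2) ℂ, conjBy U g = !![g 0 0, 0; 0, g 1 1] ∧
      ∀ X : M₂, X 1 0 = 0 → conjBy U X 1 0 = 0 := by
  refine ⟨GeneralLinearGroup.upperRightHom (g 0 1 / (g 0 0 - g 1 1)), ?_, fun X hX => ?_⟩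
  · rw [conjBy_upperRightHom _ hg]
    congr
    field_simp [sub_ne_zero.mpr hne]
    ring
  · rw [conjBy_upperRightHom _ hX]; simp

structure IsTriangularNormalForm (S : Set M₂) : Prop where
  upper : ∀ g ∈ S, g 1 0 = 0
  det_eq_one : ∀ g ∈ S, g.det = 1
  exists_diagonal_mem : ∃ lam : ℂ, lam ^ 2 ≠ 1 ∧ !![lam, 0; 0, lam⁻¹] ∈ S
  exists_ne_zero : ∃ h ∈ S, h 0 1 ≠ 0

theorem exists_conjBy_isTriangularNormalForm {S : Set M₂} (hdet : ∀ g ∈ S, g.det = 1)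
    (hnc : ∃ a ∈ S, ∃ b ∈ S, a * b ≠ b * a) {v : Fin 2 → ℂ} (hv : v ≠ 0)
    (hev : ∀ g ∈ S, ∃ c : ℂ, g *ᵥ v = c • v) :
    ∃ U : GL (Fin 2) ℂ, IsTriangularNormalForm (conjBy U '' S) := by
  obtain ⟨U₁, hU₁⟩ := exists_conjBy_upper hv hev
  have hup₁ : ∀ g ∈ conjBy U₁ '' S, g 1 0 = 0 := by
    rintro _ ⟨g, hg, rfl⟩; exact hU₁ g hg
  have hdet₁ : ∀ g ∈ conjBy U₁ '' S, g.det = 1 := by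
    rintro _ ⟨g, hg, rfl⟩; rw [det_conjBy, hdet g hg]
  obtain ⟨g, hg, hsq⟩ :=
    exists_sq_ne_one_of_upper hup₁ hdet₁ (exists_mul_ne_conjBy_image U₁ hnc)
  have hprod := mul_eq_one_of_upper (hup₁ g hg) (hdet₁ g hg)
  have hne : g 0 0 ≠ g 1 1 := fun h => hsq (by rw [sq]; nth_rw 2 [h]; exact hprod)
  obtain ⟨U₂, hU₂g, hU₂⟩ := exists_conjBy_diagonal (hup₁ g hg) hne
  have himage : conjBy (U₂ * U₁) '' S = conjBy U₂ '' (conjBy U₁ '' S) := by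
    simp only [Set.image_image, conjBy_mul]
  have hup : ∀ h ∈ conjBy (U₂ * U₁) '' S, h 1 0 = 0 := by
    rw [himage]; rintro _ ⟨h, hh, rfl⟩; exact hU₂ h (hup₁ h hh)
  refine ⟨U₂ * U₁, hup, ?_, ⟨g 0 0, hsq, ?_⟩,
    exists_ne_zero_of_upper hup (exists_mul_ne_conjBy_image _ hnc)⟩
  · rintro _ ⟨h, hh, rfl⟩; rw [det_conjBy, hdet h hh]
  · rw [himage, ← eq_inv_of_mul_eq_one_right hprod, ← hU₂g]; exact ⟨g, hg, rfl⟩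

theorem apply_eq_of_conjTranspose_mul_mul_eq {g H : M₂} (hg : g 1 0 = 0)
    (hinv : gᴴ * H * g = H) :
    star (g 0 0) * H 0 0 * g 0 0 = H 0 0 ∧
      star (g 0 0) * (H 0 0 * g 0 1 + H 0 1 * g 1 1) = H 0 1 ∧
      star (g 0 1) * (H 0 0 * g 0 1 + H 0 1 * g 1 1) +
        star (g 1 1) * (H 1 0 * g 0 1 + H 1 1 * g 1 1) = H 1 1 := by
  have e00 := congrFun (congrFun hinv 0) 0
  have e01 := congrFun (congrFun hinv 0) 1
  have e11 := congrFun (congrFun hinv 1) 1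
  simp only [mul_apply, Fin.sum_univ_two, conjTranspose_apply, hg, star_zero] at e00 e01 e11
  exact ⟨by linear_combination e00, by linear_combination e01, by linear_combination e11⟩

namespace IsTriangularNormalForm

variable {S : Set M₂} (hS : IsTriangularNormalForm S) {H : M₂}
  (hinv : ∀ g ∈ S, gᴴ * H * g = H)
include hS hinv

theorem form_zero_zero_eq_zero : H 0 0 = 0 := by
  by_contra hH
  obtain ⟨lam, hlam, hD⟩ := hS.exists_diagonal_mem
  obtain ⟨h, hh, hb⟩ := hS.exists_ne_zero
  -- if `H 0 0 ≠ 0`, every diagonal entry has modulus one, so `star (g 0 0) = g 1 1`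
  have key : ∀ g ∈ S, g 1 1 * (H 0 0 * g 0 1 + H 0 1 * g 1 1) = H 0 1 := fun g hg => by
    obtain ⟨e00, e01, -⟩ := apply_eq_of_conjTranspose_mul_mul_eq (hS.upper g hg) (hinv g hg)
    have hprod := mul_eq_one_of_upper (hS.upper g hg) (hS.det_eq_one g hg)
    have hstar : star (g 0 0) = g 1 1 := by
      have : star (g 0 0) * g 0 0 = 1 := mul_right_cancel₀ hH (by linear_combination e00)
      linear_combination g 1 1 * this - star (g 0 0) * hprod
    rwa [hstar] at e01
  have hH01 : H 0 1 = 0 := by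
    have := key _ hD
    simp only [of_apply, cons_val', cons_val_zero, cons_val_one, empty_val', cons_val_fin_one,
      mul_zero, zero_add] at this
    exact (mul_left_eq_self₀.mp (by linear_combination this : lam⁻¹ ^ 2 * H 0 1 = H 0 1))
      |>.resolve_left (by rwa [inv_pow, inv_eq_one])
  have hd : h 1 1 ≠ 0 :=
    right_ne_zero_of_mul_eq_one (mul_eq_one_of_upper (hS.upper h hh) (hS.det_eq_one h hh))
  have := key h hh
  rw [hH01, zero_mul, add_zero] at this
  exact mul_ne_zero hd (mul_ne_zero hH hb) this

theorem star_diag_eq_self (hη : H 0 1 ≠ 0) {g : M₂} (hg : g ∈ S) :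
    star (g 0 0) = g 0 0 ∧ star (g 1 1) = g 1 1 := by
  obtain ⟨-, e01, -⟩ := apply_eq_of_conjTranspose_mul_mul_eq (hS.upper g hg) (hinv g hg)
  rw [hS.form_zero_zero_eq_zero hinv, zero_mul, zero_add] at e01
  have hprod := mul_eq_one_of_upper (hS.upper g hg) (hS.det_eq_one g hg)
  have hd : g 1 1 ≠ 0 := right_ne_zero_of_mul_eq_one hprod
  have h00 : star (g 0 0) = g 0 0 :=
    mul_right_cancel₀ hd (mul_right_cancel₀ hη (by linear_combination e01 - H 0 1 * hprod))
  refine ⟨h00, ?_⟩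
  rw [eq_inv_of_mul_eq_one_right hprod, star_inv₀, h00]

theorem form_one_one_eq_zero (hη : H 0 1 ≠ 0) : H 1 1 = 0 := by
  obtain ⟨lam, hlam, hD⟩ := hS.exists_diagonal_mem
  obtain ⟨-, -, e11⟩ := apply_eq_of_conjTranspose_mul_mul_eq (hS.upper _ hD) (hinv _ hD)
  have hreal := (hS.star_diag_eq_self hinv hη hD).2
  simp only [of_apply, cons_val', cons_val_zero, cons_val_one, empty_val', cons_val_fin_one,
    star_zero, zero_mul, zero_add, mul_zero] at e11 hreal
  rw [hreal] at e11
  exact (mul_left_eq_self₀.mp (by linear_combination e11 : lam⁻¹ ^ 2 * H 1 1 = H 1 1))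
    |>.resolve_left (by rwa [inv_pow, inv_eq_one])

end IsTriangularNormalForm

theorem IsTriangularNormalForm.isRealTriangularizable_of_preservesHermitianForm {S : Set M₂}
    (hS : IsTriangularNormalForm S) (hH : PreservesHermitianForm S) :
    IsRealTriangularizable S := by
  obtain ⟨H, hHerm, hdet, hinv⟩ := hH
  have h00 := hS.form_zero_zero_eq_zero hinv
  have hH10 : H 1 0 = star (H 0 1) := by simpa using (congrFun (congrFun hHerm 1) 0).symm
  have hη : H 0 1 ≠ 0 := fun h => hdet (by rw [det_fin_two, h00, h]; ring)
  have h11 := hS.form_one_one_eq_zero hinv hη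
  have hu : I * star (H 0 1) ≠ 0 := mul_ne_zero I_ne_zero (star_ne_zero.mpr hη)
  refine ⟨diagUnit (Units.mk0 _ hu), fun g hg => ⟨?_, ?_, by rw [det_conjBy, hS.det_eq_one g hg]⟩⟩
  · obtain ⟨ha, hd⟩ := hS.star_diag_eq_self hinv hη hg
    obtain ⟨-, -, e11⟩ := apply_eq_of_conjTranspose_mul_mul_eq (hS.upper g hg) (hinv g hg)
    rw [h00, h11, hH10, hd] at e11
    have hd0 : g 1 1 ≠ 0 :=
      right_ne_zero_of_mul_eq_one (mul_eq_one_of_upper (hS.upper g hg) (hS.det_eq_one g hg))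
    have hre : star (g 0 1) * H 0 1 + star (H 0 1) * g 0 1 = 0 :=
      (mul_eq_zero.mp (by linear_combination e11 :
        (star (g 0 1) * H 0 1 + star (H 0 1) * g 0 1) * g 1 1 = 0)).resolve_right hd0
    have hb : star (I * star (H 0 1) * g 0 1) = I * star (H 0 1) * g 0 1 := by
      rw [star_mul', star_mul', star_star, show star I = -I from conj_I]
      linear_combination -I * hre
    intro i j
    rw [conjBy_diagUnit, hS.upper g hg, mul_zero]
    fin_cases i <;> fin_cases j
    exacts [conj_eq_iff_im.mp ha, conj_eq_iff_im.mp hb, zero_im, conj_eq_iff_im.mp hd]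
  · simp [conjBy_diagUnit, hS.upper g hg]

section DiagonalAndNilpotent

variable {lam c : ℂ}

theorem diagonal_mul_nilpotent :
    !![lam, 0; 0, lam⁻¹] * !![0, c; 0, 0] = lam • !![0, c; 0, 0] := by
  ext i j; fin_cases i <;> fin_cases j <;> simp [mul_apply]

theorem nilpotent_mul_diagonal :
    !![0, c; 0, 0] * !![lam, 0; 0, lam⁻¹] = lam⁻¹ • !![0, c; 0, 0] := by
  ext i j; fin_cases i <;> fin_cases j <;> simp [mul_apply, mul_comm]

theorem im_eq_zero_of_smul_mem_span (hc : c ≠ 0)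
    (h : lam • !![0, c; 0, 0] ∈
      Submodule.span ℝ (Set.range ![1, !![lam, 0; 0, lam⁻¹], !![0, c; 0, 0]])) :
    lam.im = 0 := by
  obtain ⟨r, hr⟩ := (Submodule.mem_span_range_iff_exists_fun ℝ).mp h
  have : lam = r 2 := by
    simpa [Fin.sum_univ_three, hc, eq_comm] using congrFun (congrFun hr 0) 1
  rw [this, ofReal_im]

theorem span_le_comap_realUpperTriangular (hlam : lam.im = 0) (hc : c ≠ 0) :
    Submodule.span ℝ (Set.range ![1, !![lam, 0; 0, lam⁻¹], !![0, c; 0, 0]]) ≤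
      Subalgebra.toSubmodule (realUpperTriangular.comap
        (conjBy (diagUnit (Units.mk0 c⁻¹ (inv_ne_zero hc))) : M₂ →ₐ[ℝ] M₂)) := by
  rw [Submodule.span_le]
  rintro _ ⟨i, rfl⟩
  fin_cases i
  · exact (one_mem _ : (1 : M₂) ∈ realUpperTriangular.comap _)
  · show conjBy _ _ ∈ realUpperTriangular
    rw [conjBy_diagUnit]
    refine ⟨fun i j => ?_, by simp⟩
    fin_cases i <;> fin_cases j <;> simp [hlam]
  · show conjBy _ _ ∈ realUpperTriangular
    rw [conjBy_diagUnit]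
    refine ⟨fun i j => ?_, by simp⟩
    fin_cases i <;> fin_cases j <;> simp [hc]

end DiagonalAndNilpotent

theorem IsTriangularNormalForm.isRealTriangularizable_of_finrank_eq_three {S : Set M₂}
    (hS : IsTriangularNormalForm S) (hA : Module.finrank ℝ (Algebra.adjoin ℝ S) = 3) :
    IsRealTriangularizable S := by
  obtain ⟨lam, hlam, hD⟩ := hS.exists_diagonal_mem
  obtain ⟨h, hh, hb⟩ := hS.exists_ne_zero
  set D : M₂ := !![lam, 0; 0, lam⁻¹]
  set A := Algebra.adjoin ℝ S
  have hprod : lam * lam⁻¹ = 1 := by simpa [D] using hS.det_eq_one D hD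
  have hlam' : lam ≠ lam⁻¹ := fun h0 => hlam (by rw [sq]; nth_rw 2 [h0]; exact hprod)
  have hc : (lam - lam⁻¹) * h 0 1 ≠ 0 := mul_ne_zero (sub_ne_zero.mpr hlam') hb
  set N : M₂ := !![0, (lam - lam⁻¹) * h 0 1; 0, 0]
  have hDA : D ∈ A := Algebra.subset_adjoin hD
  have hNA : N ∈ A := by
    have : D * h - h * D = N := by
      rw [mul_sub_mul_of_upper (hS.upper D hD) (hS.upper h hh)]
      simp [D, N]
    rw [← this]
    exact sub_mem (mul_mem hDA (Algebra.subset_adjoin hh)) (mul_mem (Algebra.subset_adjoin hh) hDA)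
  have hN : N ≠ 0 := fun h0 => hc (by simpa [N] using congrFun (congrFun h0 0) 1)
  have hcomm : D * N ≠ N * D := by
    rw [diagonal_mul_nilpotent, nilpotent_mul_diagonal]
    exact fun h0 => hlam' (smul_left_injective ℂ hN h0)
  have hspan := toSubmodule_eq_span_of_finrank_eq_three hDA hNA hcomm hA
  -- `D N = λ N` lies in `A = span {1, D, N}`, which forces `λ` to be real
  have hDN : D * N ∈ Subalgebra.toSubmodule A := (mul_mem hDA hNA : D * N ∈ A)
  rw [hspan, diagonal_mul_nilpotent] at hDN
  have hle := hspan ▸ span_le_comap_realUpperTriangular (im_eq_zero_of_smul_mem_span hc hDN) hc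
  refine ⟨diagUnit (Units.mk0 _ (inv_ne_zero hc)), fun g hg => ?_⟩
  obtain ⟨hreal, h10⟩ := hle (Algebra.subset_adjoin hg)
  exact ⟨hreal, h10, by rw [det_conjBy, hS.det_eq_one g hg]⟩

theorem isRealTriangularizable_iff {S : Set M₂} :
    IsRealTriangularizable S ↔
      ∃ T : M₂, IsUnit T.det ∧ ∀ g ∈ S, IsRealUpperTriangularSL (T⁻¹ * g * T) := by
  constructor
  · rintro ⟨U, hU⟩
    refine ⟨((U⁻¹ : GL (Fin 2) ℂ) : M₂), (U⁻¹).isUnit.map detMonoidHom, fun g hg => ?_⟩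
    rw [← coe_units_inv, inv_inv]
    exact hU g hg
  · rintro ⟨T, hT, hTS⟩
    exact ⟨(nonsingInvUnit T hT)⁻¹, hTS⟩

/-- A non-abelian, reducible subgroup of `SL(2,ℂ)` is unitary iff the real algebra it
generates has dimension 3, equivalently iff it is conjugate to a subgroup of the real
upper-triangular matrices of determinant 1. -/
theorem nonabelian_reducible_unitary_iff_dim_three
    (G : Subgroup (Matrix.SpecialLinearGroup (Fin 2) ℂ))
    (hnab : ¬ ∀ a ∈ G, ∀ b ∈ G, a * b = b * a)
    (hred : IsReducibleSubgroup G) :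
    (IsUnitarySubgroup G ↔
      Module.finrank ℝ
        (Algebra.adjoin ℝ
          ((fun g : Matrix.SpecialLinearGroup (Fin 2) ℂ => (g : Matrix (Fin 2) (Fin 2) ℂ)) ''
            (G : Set (Matrix.SpecialLinearGroup (Fin 2) ℂ)))) = 3) ∧
    (IsUnitarySubgroup G ↔
      ∃ T : Matrix (Fin 2) (Fin 2) ℂ, IsUnit T.det ∧
        ∀ g ∈ G,
          (∀ i j, ((T⁻¹ * (g : Matrix (Fin 2) (Fin 2) ℂ) * T) i j).im = 0) ∧
          (T⁻¹ * (g : Matrix (Fin 2) (Fin 2) ℂ) * T) 1 0 = 0 ∧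
          (T⁻¹ * (g : Matrix (Fin 2) (Fin 2) ℂ) * T).det = 1) := by
  set S : Set M₂ := (fun g : Matrix.SpecialLinearGroup (Fin 2) ℂ => (g : M₂)) '' G
  obtain ⟨v, hv, hev⟩ := hred
  push Not at hnab
  obtain ⟨a, ha, b, hb, hab⟩ := hnab
  have hab' : (a : M₂) * b ≠ b * a := fun h => hab (Subtype.ext h)
  have hnc : ∃ a ∈ S, ∃ b ∈ S, a * b ≠ b * a := ⟨a, ⟨a, ha, rfl⟩, b, ⟨b, hb, rfl⟩, hab'⟩
  obtain ⟨U, hU⟩ := exists_conjBy_isTriangularNormalForm (by rintro _ ⟨g, -, rfl⟩; exact g.2)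
    hnc hv (by rintro _ ⟨g, hg, rfl⟩; exact hev g hg)
  have hunitary : IsUnitarySubgroup G ↔ PreservesHermitianForm S := by
    simp [IsUnitarySubgroup, PreservesHermitianForm, S]
  have hform : PreservesHermitianForm S ↔ IsRealTriangularizable S :=
    ⟨fun h => (hU.isRealTriangularizable_of_preservesHermitianForm
        (h.conjBy_image U)).of_conjBy_image, IsRealTriangularizable.preservesHermitianForm⟩
  have hdim : Module.finrank ℝ (Algebra.adjoin ℝ S) = 3 ↔ IsRealTriangularizable S :=
    ⟨fun h => (hU.isRealTriangularizable_of_finrank_eq_three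
        (by rwa [finrank_adjoin_conjBy_image])).of_conjBy_image,
      fun h => h.finrank_adjoin_le.antisymm (three_le_finrank_of_mul_ne
        (Algebra.subset_adjoin ⟨a, ha, rfl⟩) (Algebra.subset_adjoin ⟨b, hb, rfl⟩) hab')⟩
  rw [hunitary, hform, hdim, isRealTriangularizable_iff]
  simp [S, IsRealUpperTriangularSL]
end
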